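/- arXiv:2403.05515 — 3 statements merged into one kernel-verified Lean document; each statement's English description precedes it below -/
import Mathlib

section
/- For all integers m with 1 ≤ m ≤ L, the identity F(m)·F(L-m+2) + 2·F(m-1)·F(L-m+1) + F(m-2)·F(L-m) = F(L-1) + F(L+1) holds, where F is the Fibonacci sequence extended to negative indices by F(-n) = (-1)^{n+1} F(n). -/
/-! The extended sequence satisfies `F(n+2) = F(n) + F(n+1)` for every integer `n`, hence so does
each side of the addition formula `F(m+n+1) = F(m)F(n) + F(m+1)F(n+1)` as a function of `n`, and
the formula holds on all of `ℤ`. Expanding `F(L+1)` at the split `(m-1) + (L-m+1)` and `F(L-1)` at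
the split `(m-2) + (L-m)` and adding gives the identity. -/

/-- Fibonacci numbers extended to negative indices via `F(-n) = (-1)^{n+1} F(n)`. -/
def fibZ (n : ℤ) : ℤ :=
  if 0 ≤ n then (Nat.fib n.toNat : ℤ)
  else (-1) ^ ((-n).toNat + 1) * (Nat.fib (-n).toNat : ℤ)

theorem eq_of_fib_recurrence {G : Type*} [AddCommGroup G] {u v : ℤ → G}
    (hu : ∀ n, u (n + 2) = u n + u (n + 1)) (hv : ∀ n, v (n + 2) = v n + v (n + 1))
    (h0 : u 0 = v 0) (h1 : u 1 = v 1) : u = v := by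
  suffices h : ∀ n, u n = v n ∧ u (n + 1) = v (n + 1) from funext fun n => (h n).1
  intro n
  induction n using Int.induction_on with
  | zero => exact ⟨h0, by simpa using h1⟩
  | succ n ih =>
    refine ⟨ih.2, ?_⟩
    rw [add_assoc, one_add_one_eq_two, hu, hv, ih.1, ih.2]
  | pred n ih =>
    have hu' := hu (-(n : ℤ) - 1)
    have hv' := hv (-(n : ℤ) - 1)
    rw [show -(n : ℤ) - 1 + 2 = -n + 1 by ring, show -(n : ℤ) - 1 + 1 = -n by ring] at hu' hv'
    refine ⟨?_, by simpa using ih.1⟩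
    rw [eq_sub_of_add_eq hu'.symm, eq_sub_of_add_eq hv'.symm, ih.1, ih.2]

theorem fibZ_natCast (n : ℕ) : fibZ n = Nat.fib n := by
  simp [fibZ]

@[simp] theorem fibZ_zero : fibZ 0 = 0 := rfl

@[simp] theorem fibZ_one : fibZ 1 = 1 := rfl

theorem fibZ_neg_natCast (n : ℕ) : fibZ (-n) = (-1) ^ (n + 1) * Nat.fib n := by
  rcases n.eq_zero_or_pos with rfl | hn
  · simp [fibZ]
  · simp [fibZ, hn.ne']

theorem fibZ_add_two (n : ℤ) : fibZ (n + 2) = fibZ n + fibZ (n + 1) := by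
  obtain ⟨k, rfl | rfl⟩ := n.eq_nat_or_neg
  · rw [show (k : ℤ) + 2 = (k + 2 : ℕ) by push_cast; ring,
      show (k : ℤ) + 1 = (k + 1 : ℕ) by push_cast; ring]
    simp only [fibZ_natCast, Nat.fib_add_two]
    push_cast
    ring
  · match k with
    | 0 => simp [fibZ]
    | 1 => simp [fibZ]
    | j + 2 =>
      rw [show -((j + 2 : ℕ) : ℤ) + 2 = -j by push_cast; ring,
        show -((j + 2 : ℕ) : ℤ) + 1 = -((j + 1 : ℕ) : ℤ) by push_cast; ring]
      simp only [fibZ_neg_natCast, Nat.fib_add_two]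
      push_cast
      ring

theorem fibZ_add (m n : ℤ) :
    fibZ (m + n + 1) = fibZ m * fibZ n + fibZ (m + 1) * fibZ (n + 1) := by
  have h := eq_of_fib_recurrence (u := fun n => fibZ (m + n + 1))
    (v := fun n => fibZ m * fibZ n + fibZ (m + 1) * fibZ (n + 1))
    (fun n => by simp only [show m + (n + 2) + 1 = m + n + 1 + 2 by ring, fibZ_add_two]; ring_nf)
    (fun n => by simp only [show n + 2 + 1 = n + 1 + 2 by ring, fibZ_add_two]; ring)
    (by simp) (by simp [add_assoc, one_add_one_eq_two, fibZ_add_two m, show fibZ 2 = 1 from rfl])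
  exact congrFun h n

theorem stmt6_general (L m : ℤ) :
    fibZ m * fibZ (L - m + 2) + 2 * fibZ (m - 1) * fibZ (L - m + 1)
      + fibZ (m - 2) * fibZ (L - m) = fibZ (L - 1) + fibZ (L + 1) := by
  have hsucc : fibZ (L + 1) = fibZ (m - 1) * fibZ (L - m + 1) + fibZ m * fibZ (L - m + 2) := by
    convert fibZ_add (m - 1) (L - m + 1) using 2 <;> ring_nf
  have hpred : fibZ (L - 1) = fibZ (m - 2) * fibZ (L - m) + fibZ (m - 1) * fibZ (L - m + 1) := by
    convert fibZ_add (m - 2) (L - m) using 2 <;> ring_nf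
  rw [hsucc, hpred]
  ring

/-- For `1 ≤ m ≤ L`:
`F(m)F(L-m+2) + 2F(m-1)F(L-m+1) + F(m-2)F(L-m) = F(L-1) + F(L+1)`. -/
theorem stmt6 (L m : ℤ) (h1 : 1 ≤ m) (h2 : m ≤ L) :
    fibZ m * fibZ (L - m + 2) + 2 * fibZ (m - 1) * fibZ (L - m + 1)
      + fibZ (m - 2) * fibZ (L - m) = fibZ (L - 1) + fibZ (L + 1) :=
  stmt6_general L m
end

section
/- Let P be an orthogonal projection and U a unitary on a finite-dimensional complex Hilbert space, and suppose P and U have no common eigenvector. Then every eigenvalue μ of M = P∘U satisfies |μ| < 1, and consequently M^k → 0 as k → ∞. -/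
/-!
An eigenvector `Φ` of `P ∘ U` with eigenvalue `μ` gives `‖μ‖ ‖Φ‖ = ‖P (U Φ)‖ ≤ ‖U Φ‖ = ‖Φ‖`, so
`‖μ‖ ≤ 1`. If `‖μ‖ = 1`, then `P` does not shorten `U Φ`, so `U Φ` lies in the range of `P`;
hence `U Φ = μ Φ` and `P Φ = Φ`, a common eigenvector. So the spectrum of `P ∘ U` lies in the open
unit disc, and Gelfand's formula turns spectral radius `< 1` into `‖(P ∘ U) ^ k‖ → 0`.
-/

open Filter Topology

section SpectralRadius

variable {A : Type*} [NormedRing A] [NormedAlgebra ℂ A] [CompleteSpace A]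

theorem spectralRadius_lt_one_of_forall_norm_lt_one {a : A}
    (ha : ∀ z ∈ spectrum ℂ a, ‖z‖ < 1) : spectralRadius ℂ a < 1 := by
  rcases (spectrum ℂ a).eq_empty_or_nonempty with hempty | hne
  · simp [spectralRadius, hempty]
  · exact_mod_cast spectrum.spectralRadius_lt_of_forall_lt_of_nonempty hne
      (r := 1) fun z hz => by exact_mod_cast ha z hz

theorem tendsto_norm_pow_atTop_nhds_zero_of_spectralRadius_lt_one {a : A}
    (ha : spectralRadius ℂ a < 1) : Tendsto (fun n : ℕ => ‖a ^ n‖) atTop (𝓝 0) := by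
  obtain ⟨r, hr0, hρr, hr1⟩ := ENNReal.lt_iff_exists_real_btwn.mp ha
  have hroot : ∀ᶠ n : ℕ in atTop, ‖a ^ n‖ ^ (1 / n : ℝ) < r := by
    filter_upwards [(spectrum.pow_norm_pow_one_div_tendsto_nhds_spectralRadius a).eventually_lt_const
      hρr] with n hn
    exact (ENNReal.ofReal_lt_ofReal_iff_of_nonneg (by positivity)).mp hn
  have hbound : ∀ᶠ n : ℕ in atTop, ‖a ^ n‖ ≤ r ^ n := by
    filter_upwards [hroot, eventually_ne_atTop 0] with n hn hn0
    calc ‖a ^ n‖ = (‖a ^ n‖ ^ (1 / n : ℝ)) ^ n := by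
          rw [one_div, Real.rpow_inv_natCast_pow (norm_nonneg _) hn0]
      _ ≤ r ^ n := pow_le_pow_left₀ (by positivity) hn.le n
  exact squeeze_zero' (Eventually.of_forall fun n => norm_nonneg _) hbound
    (tendsto_pow_atTop_nhds_zero_of_lt_one hr0 ((ENNReal.ofReal_lt_one).mp hr1))

end SpectralRadius

theorem ContinuousLinearMap.tendsto_norm_pow_atTop_nhds_zero_of_forall_eigenvalue_norm_lt_one
    {V : Type*} [NormedAddCommGroup V] [NormedSpace ℂ V] [FiniteDimensional ℂ V]
    (T : V →L[ℂ] V) (hT : ∀ (μ : ℂ) (v : V), v ≠ 0 → T v = μ • v → ‖μ‖ < 1) :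
    Tendsto (fun n : ℕ => ‖T ^ n‖) atTop (𝓝 0) := by
  refine tendsto_norm_pow_atTop_nhds_zero_of_spectralRadius_lt_one
    (spectralRadius_lt_one_of_forall_norm_lt_one fun μ hμ => ?_)
  rw [ContinuousLinearMap.spectrum_eq, ← Module.End.hasEigenvalue_iff_mem_spectrum] at hμ
  obtain ⟨v, hv⟩ := hμ.exists_hasEigenvector
  exact hT μ v hv.2 (Module.End.mem_eigenspace_iff.mp hv.1)

theorem norm_le_one_of_apply_eq_smul {𝕜 E : Type*} [NormedField 𝕜] [NormedAddCommGroup E]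
    [NormedSpace 𝕜 E] {f : E → E} (hf : ∀ x, ‖f x‖ ≤ ‖x‖) {μ : 𝕜} {v : E} (hv : v ≠ 0)
    (h : f v = μ • v) : ‖μ‖ ≤ 1 := by
  have : ‖μ‖ * ‖v‖ ≤ 1 * ‖v‖ := by
    rw [← norm_smul, ← h, one_mul]
    exact hf v
  exact le_of_mul_le_mul_right this (norm_pos_iff.mpr hv)

namespace IsStarProjection

variable {𝕜 E : Type*} [RCLike 𝕜] [NormedAddCommGroup E] [InnerProductSpace 𝕜 E] [CompleteSpace E]
  {p : E →L[𝕜] E}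

theorem norm_apply_le (hp : IsStarProjection p) (x : E) : ‖p x‖ ≤ ‖x‖ := by
  obtain ⟨K, _, rfl⟩ := isStarProjection_iff_eq_starProjection.mp hp
  exact K.norm_starProjection_apply_le x

theorem apply_eq_self_of_norm_apply_eq (hp : IsStarProjection p) {x : E} (hx : ‖p x‖ = ‖x‖) :
    p x = x := by
  obtain ⟨K, _, rfl⟩ := isStarProjection_iff_eq_starProjection.mp hp
  exact K.starProjection_eq_self_iff.mpr ((K.mem_iff_norm_starProjection x).mpr hx)

theorem apply_eq_self_and_apply_eq_smul_of_norm_eq_one (hp : IsStarProjection p)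
    {u : E →L[𝕜] E} {μ : 𝕜} {v : E} (hu : ‖u v‖ = ‖v‖) (hv : (p ∘L u) v = μ • v)
    (hμ : ‖μ‖ = 1) : p v = v ∧ u v = μ • v := by
  have hpuv : p (u v) = μ • v := hv
  have hfix : p (u v) = u v := hp.apply_eq_self_of_norm_apply_eq (by
    rw [hpuv, norm_smul, hμ, one_mul, hu])
  have huv : u v = μ • v := hfix.symm.trans hpuv
  have hμ0 : μ ≠ 0 := norm_ne_zero_iff.mp (hμ ▸ one_ne_zero)
  refine ⟨smul_right_injective E hμ0 ?_, huv⟩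
  simp only [← map_smul, ← huv, hfix]

end IsStarProjection

theorem stmt9_general {V : Type*} [NormedAddCommGroup V] [InnerProductSpace ℂ V]
    [FiniteDimensional ℂ V]
    (P U : V →L[ℂ] V)
    (hPproj : P ∘L P = P) (hPsa : IsSelfAdjoint P)
    (hUiso : ∀ x y : V, (inner ℂ (U x) (U y) : ℂ) = inner ℂ x y)
    (hno : ¬ ∃ v : V, v ≠ 0 ∧ ∃ lam kap : ℂ, P v = lam • v ∧ U v = kap • v) :
    (∀ (μ : ℂ) (Φ : V), Φ ≠ 0 → (P ∘L U) Φ = μ • Φ → ‖μ‖ < 1) ∧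
      Filter.Tendsto (fun k : ℕ => ‖(P ∘L U) ^ k‖) Filter.atTop (nhds 0) := by
  have hP : IsStarProjection P := ⟨hPproj, hPsa⟩
  have hU : ∀ x, ‖U x‖ = ‖x‖ := (U.toLinearMap.isometryOfInner hUiso).norm_map
  have heig : ∀ (μ : ℂ) (Φ : V), Φ ≠ 0 → (P ∘L U) Φ = μ • Φ → ‖μ‖ < 1 := by
    intro μ Φ hΦ hM
    have hle : ‖μ‖ ≤ 1 := norm_le_one_of_apply_eq_smul
      (fun x => (hP.norm_apply_le (U x)).trans (hU x).le) hΦ hM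
    refine hle.lt_of_ne fun hμ => hno ⟨Φ, hΦ, 1, μ, ?_⟩
    obtain ⟨hPΦ, hUΦ⟩ := hP.apply_eq_self_and_apply_eq_smul_of_norm_eq_one (hU Φ) hM hμ
    exact ⟨by rw [hPΦ, one_smul], hUΦ⟩
  exact ⟨heig, (P ∘L U).tendsto_norm_pow_atTop_nhds_zero_of_forall_eigenvalue_norm_lt_one heig⟩

/-- If the orthogonal projection `P` and the unitary `U` have no common eigenvector, then
every eigenvalue `μ` of `M = P ∘ U` satisfies `|μ| < 1`, and `M^k → 0` in operator norm. -/
theorem stmt9 {V : Type*} [NormedAddCommGroup V] [InnerProductSpace ℂ V]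
    [FiniteDimensional ℂ V]
    (P U : V →L[ℂ] V)
    (hPproj : P ∘L P = P) (hPsa : IsSelfAdjoint P)
    (hUiso : ∀ x y : V, (inner ℂ (U x) (U y) : ℂ) = inner ℂ x y)
    (hUsurj : Function.Surjective U)
    (hno : ¬ ∃ v : V, v ≠ 0 ∧ ∃ lam kap : ℂ, P v = lam • v ∧ U v = kap • v) :
    (∀ (μ : ℂ) (Φ : V), Φ ≠ 0 → (P ∘L U) Φ = μ • Φ → ‖μ‖ < 1) ∧
      Filter.Tendsto (fun k : ℕ => ‖(P ∘L U) ^ k‖) Filter.atTop (nhds 0) :=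
  stmt9_general P U hPproj hPsa hUiso hno
end

section
/- Consider the 4×4 positive semidefinite matrix ρ = (1/χ)[ F_{L-1}(|00⟩-|11⟩)(⟨00|-⟨11|) + F_L |00⟩⟨00| ] with χ = F_{L-1}+F_{L+1}, acting on the span of |00⟩ and |11⟩ in ℂ²⊗ℂ². Then ρ has unit trace, and as L → ∞ it converges to (1/(√5·φ))(φ²|00⟩⟨00| + |11⟩⟨11| − |00⟩⟨11| − |11⟩⟨00|), where φ is the golden ratio. -/
/-- The golden ratio. -/
noncomputable def phi : ℝ := (1 + Real.sqrt 5) / 2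

/-- The vector `|00⟩ - |11⟩` (as coefficients on the product basis of `ℂ²⊗ℂ²`). -/
def vMinus : Fin 2 × Fin 2 → ℝ := fun p =>
  if p = (0, 0) then 1 else if p = (1, 1) then -1 else 0

/-- `ρ_L = (1/χ)[F_{L-1}(|00⟩-|11⟩)(⟨00|-⟨11|) + F_L |00⟩⟨00|]` with `χ = F_{L-1}+F_{L+1}`. -/
noncomputable def rhoMat (L : ℕ) : Matrix (Fin 2 × Fin 2) (Fin 2 × Fin 2) ℝ :=
  fun i j => ((Nat.fib (L - 1) + Nat.fib (L + 1) : ℝ))⁻¹ *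
    ((Nat.fib (L - 1) : ℝ) * vMinus i * vMinus j +
      (Nat.fib L : ℝ) * (if i = (0, 0) ∧ j = (0, 0) then 1 else 0))

/-- The limiting matrix `(1/(√5 φ))(φ²|00⟩⟨00| + |11⟩⟨11| − |00⟩⟨11| − |11⟩⟨00|)`. -/
noncomputable def rhoLim : Matrix (Fin 2 × Fin 2) (Fin 2 × Fin 2) ℝ :=
  fun i j => (Real.sqrt 5 * phi)⁻¹ *
    (if i = (0, 0) ∧ j = (0, 0) then phi ^ 2
     else if i = (1, 1) ∧ j = (1, 1) then 1
     else if (i = (0, 0) ∧ j = (1, 1)) ∨ (i = (1, 1) ∧ j = (0, 0)) then -1 else 0)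

/-!
Binet's formula gives `F (n+1) - φ F n = ψ ^ n` with `|ψ| < 1`, so `F (n+k) / F n → φ ^ k`.
For `L = n + 1` every entry of `ρ_L` is a combination of `F n / χ` and `F (n+1) / χ` with
`χ = F n + F (n+2)`, and these tend to `1 / (1 + φ²)` and `φ / (1 + φ²)`; the normalisation
`√5 φ` of the limit is `1 + φ²`. The trace is `(2 F n + F (n+1)) / χ = 1` because
`F (n+2) = F n + F (n+1)`.
-/

open Filter Topology
open scoped goldenRatio

namespace Real

theorem tendsto_coe_fib_atTop : Tendsto (fun n => (Nat.fib n : ℝ)) atTop atTop :=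
  tendsto_natCast_atTop_atTop.comp <| tendsto_atTop_mono' atTop
    (eventually_ge_atTop 5 |>.mono fun _ hn => Nat.le_fib_self hn) tendsto_id

theorem tendsto_fib_succ_div_fib :
    Tendsto (fun n => (Nat.fib (n + 1) : ℝ) / Nat.fib n) atTop (𝓝 φ) := by
  have hψ : Tendsto (fun n => ψ ^ n / Nat.fib n) atTop (𝓝 0) :=
    (tendsto_pow_atTop_nhds_zero_of_abs_lt_one <| abs_lt.2
      ⟨neg_one_lt_goldenConj, goldenConj_neg.trans one_pos⟩).div_atTop tendsto_coe_fib_atTop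
  have hφ := (tendsto_const_nhds (x := φ)).add hψ
  rw [add_zero] at hφ
  refine hφ.congr' <| (eventually_ge_atTop 1).mono fun n hn => ?_
  have hfib : (Nat.fib n : ℝ) ≠ 0 := by exact_mod_cast (Nat.fib_pos.2 hn).ne'
  rw [← fib_succ_sub_goldenRatio_mul_fib]
  field_simp
  ring

theorem tendsto_fib_add_div_fib (k : ℕ) :
    Tendsto (fun n => (Nat.fib (n + k) : ℝ) / Nat.fib n) atTop (𝓝 (φ ^ k)) := by
  induction k with
  | zero =>
    refine tendsto_const_nhds.congr' <| (eventually_ge_atTop 1).mono fun n hn => ?_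
    have hfib : (Nat.fib n : ℝ) ≠ 0 := by exact_mod_cast (Nat.fib_pos.2 hn).ne'
    simp [hfib]
  | succ k ih =>
    have hstep := tendsto_fib_succ_div_fib.comp (tendsto_add_atTop_nat k)
    refine (ih.mul hstep).congr' <| (eventually_ge_atTop 1).mono fun n hn => ?_
    have hfib : (Nat.fib (n + k) : ℝ) ≠ 0 := by exact_mod_cast (Nat.fib_pos.2 (by omega)).ne'
    simp only [Function.comp_apply, ← add_assoc]
    field_simp

theorem tendsto_fib_add_div_fib_add_fib_add_two (k : ℕ) :
    Tendsto (fun n => (Nat.fib (n + k) : ℝ) / (Nat.fib n + Nat.fib (n + 2))) atTop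
      (𝓝 (φ ^ k / (1 + φ ^ 2))) := by
  have hden : (1 + φ ^ 2) ≠ 0 := by positivity
  refine ((tendsto_fib_add_div_fib k).div (tendsto_const_nhds.add (tendsto_fib_add_div_fib 2))
    hden).congr' <| (eventually_ge_atTop 1).mono fun n hn => ?_
  have hfib : (Nat.fib n : ℝ) ≠ 0 := by exact_mod_cast (Nat.fib_pos.2 hn).ne'
  simp only [Pi.div_apply]
  field_simp

theorem one_add_goldenRatio_sq : 1 + φ ^ 2 = √5 * φ := by
  linear_combination (-1 / 4 : ℝ) * sq_sqrt (show (0 : ℝ) ≤ 5 by norm_num)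

end Real

open Real

theorem rhoMat_add_one_apply (n : ℕ) (i j : Fin 2 × Fin 2) :
    rhoMat (n + 1) i j =
      Nat.fib n / (Nat.fib n + Nat.fib (n + 2)) * (vMinus i * vMinus j) +
        Nat.fib (n + 1) / (Nat.fib n + Nat.fib (n + 2)) *
          (if i = (0, 0) ∧ j = (0, 0) then 1 else 0) := by
  simp only [rhoMat, Nat.add_sub_cancel]
  ring

theorem rhoLim_apply (i j : Fin 2 × Fin 2) :
    rhoLim i j = 1 / (1 + φ ^ 2) * (vMinus i * vMinus j) +
      φ / (1 + φ ^ 2) * (if i = (0, 0) ∧ j = (0, 0) then 1 else 0) := by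
  have hφ : φ ≠ 0 := goldenRatio_ne_zero
  have h5 : √5 ≠ 0 := by positivity
  simp only [rhoLim, show phi = φ from rfl, one_add_goldenRatio_sq]
  fin_cases i <;> fin_cases j <;> simp [vMinus]
  field_simp
  ring

theorem trace_rhoMat_add_one (n : ℕ) : (rhoMat (n + 1)).trace = 1 := by
  have hχ : (Nat.fib n + Nat.fib (n + 2) : ℝ) ≠ 0 := by
    have := Nat.fib_pos.2 (Nat.succ_pos (n + 1))
    positivity
  have htrace : (rhoMat (n + 1)).trace =
      (2 * Nat.fib n + Nat.fib (n + 1)) / (Nat.fib n + Nat.fib (n + 2)) := by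
    simp only [Matrix.trace, Matrix.diag_apply, rhoMat_add_one_apply, vMinus, Fin.isValue, mul_ite,
      mul_one, mul_neg, mul_zero, and_self, Fintype.sum_prod_type, Prod.mk.injEq, Fin.sum_univ_two,
      and_true, zero_ne_one, and_false, ↓reduceIte, one_ne_zero, add_zero, neg_neg, zero_add]
    ring
  rw [htrace, div_eq_one_iff_eq hχ, Nat.fib_add_two]
  push_cast
  ring

/-- `ρ_L` has unit trace for `L ≥ 1`, and converges entrywise to `rhoLim` as `L → ∞`. -/
theorem stmt13 :
    (∀ L : ℕ, 1 ≤ L → Matrix.trace (rhoMat L) = 1) ∧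
      ∀ i j : Fin 2 × Fin 2,
        Filter.Tendsto (fun L : ℕ => rhoMat L i j) Filter.atTop (nhds (rhoLim i j)) := by
  refine ⟨fun L hL => ?_, fun i j => ?_⟩
  · obtain ⟨n, rfl⟩ := Nat.exists_eq_add_of_le' hL
    exact trace_rhoMat_add_one n
  · rw [← tendsto_add_atTop_iff_nat 1, rhoLim_apply]
    simp only [rhoMat_add_one_apply]
    have h0 := tendsto_fib_add_div_fib_add_fib_add_two 0
    have h1 := tendsto_fib_add_div_fib_add_fib_add_two 1
    simp only [add_zero, pow_zero, pow_one] at h0 h1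
    exact (h0.mul_const _).add (h1.mul_const _)
end
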